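/- arXiv:1102.0852 — 2 statements merged into one kernel-verified Lean document; each statement's English description precedes it below -/
import Mathlib

section
/- Under the same hypotheses, ∫_b^∞ |G(t)m(t) − K(t)f(t)| dt ≤ α(m)·∫_b^∞ |f''(t)| dt, and consequently ∫_0^∞ |Gm − Kf| dt ≤ α(m)·∫_a^∞ |f''| dt + (α(m)+1)·‖G − K‖₂·(∫_a^b f² dt)^{1/2}. -/
/-!
On `[0, a)` both equations have coefficient `K`, so `m = f` there by Grönwall's uniqueness
argument and the integrand vanishes. For `t > 0` write
`G m - K f = (G - K) m + K f (m / f - 1)`; since `K f = -f''` and `|m / f - 1| ≤ α` (hence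
`|m| ≤ (α + 1) f`), this gives `|G m - K f| ≤ (α + 1) |G - K| f + α |f''|`. Integrating over
`[b, ∞)`, where `G = K`, gives the first bound; integrating over `[a, ∞)` and applying
Cauchy–Schwarz on `[a, b]`, which carries the support of `G - K`, gives the second.
-/

open MeasureTheory Set

theorem eqOn_of_deriv_deriv_add_mul_eq_zero {u v K : ℝ → ℝ} {t₀ t₁ : ℝ}
    (hu : ContDiff ℝ 2 u) (hv : ContDiff ℝ 2 v) (hK : ContinuousOn K (Icc t₀ t₁))
    (hu_ode : ∀ t ∈ Ico t₀ t₁, deriv (deriv u) t + K t * u t = 0)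
    (hv_ode : ∀ t ∈ Ico t₀ t₁, deriv (deriv v) t + K t * v t = 0)
    (h₀ : u t₀ = v t₀) (h₀' : deriv u t₀ = deriv v t₀) : EqOn u v (Icc t₀ t₁) := by
  obtain ⟨hdu, -, hu'⟩ := contDiff_succ_iff_deriv.mp (show ContDiff ℝ (1 + 1) u from hu)
  obtain ⟨hdv, -, hv'⟩ := contDiff_succ_iff_deriv.mp (show ContDiff ℝ (1 + 1) v from hv)
  have hddu := hu'.differentiable one_ne_zero
  have hddv := hv'.differentiable one_ne_zero
  obtain ⟨C, hC⟩ := isCompact_Icc.exists_bound_of_continuousOn hK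
  -- Grönwall for the phase-space curve `(w, w')` of `w = u - v`, whose velocity is `(w', -K w)`.
  have hw (t : ℝ) : HasDerivAt (fun s => (u s - v s, deriv u s - deriv v s))
      (deriv u t - deriv v t, deriv (deriv u) t - deriv (deriv v) t) t :=
    ((hdu t).hasDerivAt.sub (hdv t).hasDerivAt).prodMk
      ((hddu t).hasDerivAt.sub (hddv t).hasDerivAt)
  have hzero := eq_zero_of_abs_deriv_le_mul_abs_self_of_eq_zero_right (K := max 1 C) (a := t₀)
    (b := t₁) ((hdu.continuous.sub hdv.continuous).prodMk
      (hddu.continuous.sub hddv.continuous)).continuousOn (fun t _ => (hw t).hasDerivWithinAt)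
    (by simp [h₀, h₀']) fun t ht => by
      have hL : ‖K t‖ ≤ max 1 C := (hC t (Ico_subset_Icc_self ht)).trans (le_max_right _ _)
      rw [show deriv (deriv u) t - deriv (deriv v) t = -(K t * (u t - v t)) by
        linear_combination hu_ode t ht - hv_ode t ht, Prod.norm_def, norm_neg, norm_mul]
      refine max_le ?_ ?_
      · exact (norm_snd_le (u t - v t, deriv u t - deriv v t)).trans
          (le_mul_of_one_le_left (norm_nonneg _) (le_max_left _ _))
      · exact mul_le_mul hL (norm_fst_le (u t - v t, deriv u t - deriv v t)) (norm_nonneg _)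
          (zero_le_one.trans (le_max_left _ _))
  exact fun t ht => sub_eq_zero.mp (congrArg Prod.fst (hzero t ht))

theorem abs_mul_sub_mul_le {g k x y α : ℝ} (hy : 0 < y) (hα : |x / y - 1| ≤ α) :
    |g * x - k * y| ≤ (α + 1) * (|g - k| * y) + α * |k * y| := by
  have hx : |x| ≤ (α + 1) * y := by
    calc |x| = |x / y - 1 + 1| * y := by
          rw [sub_add_cancel, abs_div, abs_of_pos hy, div_mul_cancel₀ _ hy.ne']
      _ ≤ (α + 1) * y := by gcongr; exact (abs_add_le _ _).trans (by simpa using hα)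
  calc |g * x - k * y| = |(g - k) * x + k * y * (x / y - 1)| := by
        congr 1; field_simp; ring
    _ ≤ |g - k| * ((α + 1) * y) + |k * y| * α := by
        refine (abs_add_le _ _).trans (add_le_add ?_ ?_) <;> rw [abs_mul] <;> gcongr
    _ = _ := by ring

theorem integral_mul_le_sqrt_mul_sqrt {X : Type*} [MeasurableSpace X] {μ : Measure X}
    {u w : X → ℝ} (hu : MemLp u 2 μ) (hw : MemLp w 2 μ) (hu₀ : 0 ≤ᵐ[μ] u)
    (hw₀ : 0 ≤ᵐ[μ] w) :
    ∫ x, u x * w x ∂μ ≤ √(∫ x, u x ^ 2 ∂μ) * √(∫ x, w x ^ 2 ∂μ) := by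
  have h := integral_mul_le_Lp_mul_Lq_of_nonneg Real.HolderConjugate.two_two hu₀ hw₀
    (by simpa using hu) (by simpa using hw)
  simpa [Real.sqrt_eq_rpow] using h

theorem setIntegral_abs_mul_le_sqrt_mul_sqrt {D f : ℝ → ℝ} {a b c : ℝ} (hca : c ≤ a)
    (hD : Continuous D) (hf : Continuous f) (hf₀ : ∀ t ∈ Icc a b, 0 ≤ f t)
    (hD_supp : ∀ t ∉ Icc a b, D t = 0) :
    ∫ t in Ici a, |D t| * f t ≤
      √(∫ t in Ici c, D t ^ 2) * √(∫ t in Icc a b, f t ^ 2) := by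
  have hIcc {x : ℝ} (hx : x ≤ a) (F : ℝ → ℝ) (hF : ∀ t, D t = 0 → F t = 0) :
      ∫ t in Ici x, F t = ∫ t in Icc a b, F t :=
    setIntegral_eq_of_subset_of_forall_sdiff_eq_zero measurableSet_Ici
      (Icc_subset_Ici_self.trans (Ici_subset_Ici.2 hx)) fun t ht => hF t (hD_supp t ht.2)
  have hL2 {u : ℝ → ℝ} (hu : Continuous u) : MemLp u 2 (volume.restrict (Icc a b)) :=
    (memLp_two_iff_integrable_sq hu.aestronglyMeasurable).2 (hu.pow 2).integrableOn_Icc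
  rw [hIcc le_rfl _ fun t h => by simp [h], hIcc hca _ fun t h => by simp [h]]
  simpa only [sq_abs] using integral_mul_le_sqrt_mul_sqrt (hL2 hD.abs) (hL2 hf)
    (ae_of_all _ fun _ => abs_nonneg _) ((ae_restrict_iff' measurableSet_Icc).2 (ae_of_all _ hf₀))

theorem setIntegral_abs_le_mul_add_mul {X : Type*} [MeasurableSpace X] {μ : Measure X}
    {s : Set X} (hs : MeasurableSet s) {F P Q : X → ℝ} {c d : ℝ} (hP : IntegrableOn P s μ)
    (hQ : IntegrableOn Q s μ) (hF : ∀ x ∈ s, |F x| ≤ c * P x + d * Q x) :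
    ∫ x in s, |F x| ∂μ ≤ c * ∫ x in s, P x ∂μ + d * ∫ x in s, Q x ∂μ := by
  rw [← integral_const_mul, ← integral_const_mul,
    ← integral_add (hP.const_mul c) (hQ.const_mul d)]
  exact integral_mono_of_nonneg (ae_of_all _ fun _ => abs_nonneg _)
    ((hP.const_mul c).add (hQ.const_mul d)) ((ae_restrict_iff' hs).2 (ae_of_all _ hF))

theorem stmt4 (f m K G : ℝ → ℝ) (a b : ℝ) (ha : 1 ≤ a) (hab : a < b) (α : ℝ)
    (hKc : Continuous K) (hGc : Continuous G)
    (hf : ContDiff ℝ 2 f) (hm : ContDiff ℝ 2 m)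
    (hfode : ∀ t ≥ (0:ℝ), deriv (deriv f) t + K t * f t = 0)
    (hmode : ∀ t ≥ (0:ℝ), deriv (deriv m) t + G t * m t = 0)
    (h0 : m 0 = f 0) (h0' : deriv m 0 = deriv f 0)
    (hfpos : ∀ t > (0:ℝ), 0 < f t)
    (hsupp : ∀ t, t < a ∨ b < t → G t = K t)
    (hf'' : IntegrableOn (fun t => |deriv (deriv f) t|) (Ici (0:ℝ)))
    (hα : IsLUB {x : ℝ | ∃ t ≥ (0:ℝ), x = |m t / f t - 1|} α) :
    (∫ t in Ici b, |G t * m t - K t * f t| ≤ α * ∫ t in Ici b, |deriv (deriv f) t|) ∧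
    (∫ t in Ici (0:ℝ), |G t * m t - K t * f t| ≤
      α * (∫ t in Ici a, |deriv (deriv f) t|) +
      (α + 1) * Real.sqrt (∫ t in Ici (0:ℝ), (G t - K t) ^ 2) *
        Real.sqrt (∫ t in Icc a b, (f t) ^ 2)) := by
  have ha₀ : 0 < a := by linarith
  have hratio (t : ℝ) (ht : 0 ≤ t) : |m t / f t - 1| ≤ α := hα.1 ⟨t, ht, rfl⟩
  have hGK_out (t : ℝ) (ht : t ∉ Icc a b) : G t = K t :=
    hsupp t (by simpa only [mem_Icc, not_and_or, not_le] using ht)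
  have hGK_b : EqOn G K (Ici b) := by
    simpa using EqOn.closure (fun t ht => hsupp t (Or.inr ht) : EqOn G K (Ioi b)) hGc hKc
  have hmf : EqOn m f (Icc 0 a) := eqOn_of_deriv_deriv_add_mul_eq_zero hm hf hKc.continuousOn
    (fun t ht => hsupp t (Or.inl ht.2) ▸ hmode t ht.1) (fun t ht => hfode t ht.1) h0 h0'
  have hpt (t : ℝ) (ht : 0 < t) : |G t * m t - K t * f t| ≤
      (α + 1) * (|G t - K t| * f t) + α * |deriv (deriv f) t| := by
    calc _ ≤ (α + 1) * (|G t - K t| * f t) + α * |K t * f t| :=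
          abs_mul_sub_mul_le (hfpos t ht) (hratio t ht.le)
      _ = _ := by rw [show K t * f t = -deriv (deriv f) t by linarith [hfode t ht.le], abs_neg]
  have hf''_a : IntegrableOn (fun t => |deriv (deriv f) t|) (Ici a) :=
    hf''.mono_set (Ici_subset_Ici.2 ha₀.le)
  have hint : Integrable (fun t => |G t - K t| * f t) :=
    ((hGc.sub hKc).abs.mul hf.continuous).integrable_of_hasCompactSupport
      (HasCompactSupport.intro (isCompact_Icc (a := a) (b := b)) fun t ht => by
        simp [hGK_out t ht])
  refine ⟨?_, ?_⟩
  · calc _ ≤ (α + 1) * (∫ t in Ici b, |G t - K t| * f t) +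
          α * ∫ t in Ici b, |deriv (deriv f) t| :=
        setIntegral_abs_le_mul_add_mul measurableSet_Ici hint.integrableOn
          (hf''_a.mono_set (Ici_subset_Ici.2 hab.le)) fun t ht => hpt t (by linarith [mem_Ici.1 ht])
      _ = _ := by
        rw [setIntegral_eq_zero_of_forall_eq_zero fun t ht => by simp [hGK_b ht], mul_zero,
          zero_add]
  · have hα₀ : 0 ≤ α := (abs_nonneg _).trans (hratio 0 le_rfl)
    calc ∫ t in Ici 0, |G t * m t - K t * f t| = ∫ t in Ici a, |G t * m t - K t * f t| :=
          setIntegral_eq_of_subset_of_forall_sdiff_eq_zero measurableSet_Ici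
            (Ici_subset_Ici.2 ha₀.le) fun t ⟨ht₀, hta⟩ => by
              have hta : t < a := not_le.1 hta
              simp [hmf ⟨ht₀, hta.le⟩, hsupp t (Or.inl hta)]
      _ ≤ (α + 1) * (∫ t in Ici a, |G t - K t| * f t) +
            α * ∫ t in Ici a, |deriv (deriv f) t| :=
          setIntegral_abs_le_mul_add_mul measurableSet_Ici hint.integrableOn hf''_a
            fun t ht => hpt t (ha₀.trans_le ht)
      _ ≤ _ := by
          rw [add_comm, mul_assoc]
          gcongr
          exact setIntegral_abs_mul_le_sqrt_mul_sqrt ha₀.le (hGc.sub hKc) hf.continuous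
            (fun t ht => (hfpos t (ha₀.trans_le ht.1)).le)
            fun t ht => sub_eq_zero.2 (hGK_out t ht)
end

section
/- (Continuity of solutions in the coefficient, main stability proposition) Let K : [0,∞) → ℝ be continuous and f the solution of f'' + K f = 0 with f(0) = 0, f'(0) = 1. Assume f > 0 on (0,∞), ∫_1^∞ f^(−2) dt < ∞, and ∫_0^∞ |f''| dt < ∞. Then for every ε > 0 and every bounded interval (a,b) ⊂ [1,∞) there exists δ > 0 such that: for every continuous G : [0,∞) → ℝ with supp(G − K) ⊂ [a,b] and ‖G − K‖₂ < δ, the solution m of m'' + G m = 0 with m(0) = 0, m'(0) = 1 satisfies ∫_0^∞ |G m − K f| dt < ε and ∫_1^∞ |m^(−2) − f^(−2)| dt < ε. -/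
/-!
The difference `u = m - f` solves `u'' + G u = (K - G) f` with `u(0) = u'(0) = 0`. On `[0, b]` the
energy `u'² + u²` satisfies a Grönwall inequality whose exponent `∫ (2 + |G|)` stays bounded and
whose source `∫ (G - K)² f²` is `O(δ²)`, so `u` and `u'` are `O(δ)` there. Beyond `b` both `u` and
`f` solve `y'' + K y = 0`: their Wronskian `W` is constant and `(u / f)' = W / f²`, so
`|u| ≤ (|u(b)| / f(b) + |W| ∫_b^∞ f⁻²) f = O(δ) f`. Hence `G m - K f = (G - K) m + K u` is
controlled by `|G - K|` on `[0, b]` and by `δ |K| f = δ |f''|` on the tail, and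
`m⁻² - f⁻²` by `δ f⁻²` on `[1, ∞)`.
-/

open MeasureTheory Set

theorem exists_pos_le_and_mul_lt (C : ℝ) {δ₀ ε : ℝ} (hδ₀ : 0 < δ₀) (hε : 0 < ε) :
    ∃ δ, 0 < δ ∧ δ ≤ δ₀ ∧ C * δ < ε := by
  have hC : 0 < |C| + 1 := by positivity
  set δ := min δ₀ (ε / (|C| + 1))
  have hδ : 0 < δ := lt_min hδ₀ (div_pos hε hC)
  refine ⟨δ, hδ, min_le_left _ _, ?_⟩
  calc C * δ ≤ |C| * (ε / (|C| + 1)) :=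
        mul_le_mul (le_abs_self C) (min_le_right _ _) hδ.le (abs_nonneg C)
    _ < ε := by rw [mul_div_assoc', div_lt_iff₀ hC]; nlinarith

theorem abs_inv_sq_sub_inv_sq_le {x y η : ℝ} (hy : 0 < y) (hη : η ≤ 1 / 2)
    (h : |x - y| ≤ η * y) : |(x ^ 2)⁻¹ - (y ^ 2)⁻¹| ≤ 10 * η * (y ^ 2)⁻¹ := by
  obtain ⟨hlo, hhi⟩ := abs_le.1 h
  have hx : y / 2 ≤ x := by nlinarith
  have hx0 : 0 < x := by linarith
  have hxy : 0 < x ^ 2 * y ^ 2 := by positivity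
  rw [inv_sub_inv (pow_pos hx0 2).ne' (pow_pos hy 2).ne', abs_div, abs_of_pos hxy,
    div_le_iff₀ hxy, show y ^ 2 - x ^ 2 = (y - x) * (y + x) by ring, abs_mul,
    abs_sub_comm, abs_of_pos (by linarith : 0 < y + x)]
  have hη0 : 0 ≤ η := nonneg_of_mul_nonneg_left ((abs_nonneg _).trans h) hy
  calc |x - y| * (y + x) ≤ η * y * (5 / 2 * y) := by
        gcongr; nlinarith [mul_le_mul_of_nonneg_right hη hy.le]
    _ ≤ 10 * η * (y ^ 2)⁻¹ * (x ^ 2 * y ^ 2) := by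
      rw [show 10 * η * (y ^ 2)⁻¹ * (x ^ 2 * y ^ 2) = 10 * η * x ^ 2 by field_simp]
      nlinarith [mul_le_mul hx hx (by positivity) hx0.le]

theorem setIntegral_abs_inv_sq_sub_inv_sq_le {f m : ℝ → ℝ} {a η : ℝ} (hη : η ≤ 1 / 2)
    (hfpos : ∀ t ≥ a, 0 < f t) (hfint : IntegrableOn (fun t => (f t ^ 2)⁻¹) (Ici a))
    (h : ∀ t ≥ a, |m t - f t| ≤ η * f t) :
    ∫ t in Ici a, |(m t ^ 2)⁻¹ - (f t ^ 2)⁻¹| ≤ 10 * η * ∫ t in Ici a, (f t ^ 2)⁻¹ := by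
  rw [← integral_const_mul]
  refine integral_mono_of_nonneg (.of_forall fun _ => abs_nonneg _) (hfint.const_mul _) ?_
  exact (ae_restrict_iff' measurableSet_Ici).2
    (.of_forall fun t ht => abs_inv_sq_sub_inv_sq_le (hfpos t ht) hη (h t ht))

theorem intervalIntegral_abs_le_of_integral_sq_le {g : ℝ → ℝ} {a b δ : ℝ} (hab : a ≤ b)
    (hδ : 0 < δ) (hg : Continuous g) (h2 : ∫ s in a..b, g s ^ 2 ≤ δ ^ 2) :
    ∫ s in a..b, |g s| ≤ (1 + (b - a)) / 2 * δ := by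
  have hpt : ∀ s ∈ Icc a b, |g s| ≤ g s ^ 2 / (2 * δ) + δ / 2 := fun s _ => by
    rw [div_add_div _ _ (by positivity) two_ne_zero, le_div_iff₀ (by positivity)]
    nlinarith [sq_nonneg (|g s| - δ), sq_abs (g s)]
  calc ∫ s in a..b, |g s| ≤ ∫ s in a..b, (g s ^ 2 / (2 * δ) + δ / 2) :=
        intervalIntegral.integral_mono_on hab (hg.abs.intervalIntegrable _ _)
          ((by fun_prop : Continuous _).intervalIntegrable _ _) hpt
    _ = (∫ s in a..b, g s ^ 2) / (2 * δ) + (b - a) * (δ / 2) := by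
      rw [intervalIntegral.integral_add ((by fun_prop : Continuous _).intervalIntegrable _ _)
        intervalIntegrable_const, intervalIntegral.integral_div,
        intervalIntegral.integral_const, smul_eq_mul]
    _ ≤ δ ^ 2 / (2 * δ) + (b - a) * (δ / 2) := by gcongr
    _ = (1 + (b - a)) / 2 * δ := by field_simp

theorem setIntegral_Ici_le_of_le {φ g₁ g₂ : ℝ → ℝ} {a b : ℝ} (hab : a ≤ b)
    (hφ : AEStronglyMeasurable φ (volume.restrict (Ici a))) (hg₁ : IntervalIntegrable g₁ volume a b)
    (hg₂ : IntegrableOn g₂ (Ioi b)) (h₁ : ∀ t ∈ Icc a b, ‖φ t‖ ≤ g₁ t)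
    (h₂ : ∀ t ∈ Ioi b, ‖φ t‖ ≤ g₂ t) :
    ∫ t in Ici a, φ t ≤ (∫ t in a..b, g₁ t) + ∫ t in Ioi b, g₂ t := by
  have hg₁' : IntegrableOn g₁ (Icc a b) := (integrableOn_Icc_iff_integrableOn_Ioc).2
    ((intervalIntegrable_iff_integrableOn_Ioc_of_le hab).1 hg₁)
  have hφ₁ : IntegrableOn φ (Icc a b) := Integrable.mono' hg₁'
    (hφ.mono_measure (Measure.restrict_mono Icc_subset_Ici_self le_rfl))
    ((ae_restrict_iff' measurableSet_Icc).2 (.of_forall h₁))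
  have hφ₂ : IntegrableOn φ (Ioi b) := Integrable.mono' hg₂
    (hφ.mono_measure (Measure.restrict_mono (Ioi_subset_Ici_iff.2 hab) le_rfl))
    ((ae_restrict_iff' measurableSet_Ioi).2 (.of_forall h₂))
  rw [← Icc_union_Ioi_eq_Ici hab, setIntegral_union
      ((Iic_disjoint_Ioi le_rfl).mono_left Icc_subset_Iic_self) measurableSet_Ioi hφ₁ hφ₂,
    intervalIntegral.integral_of_le hab, ← integral_Icc_eq_integral_Ioc]
  exact add_le_add
    (setIntegral_mono_on hφ₁ hg₁' measurableSet_Icc fun t ht =>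
      (Real.le_norm_self _).trans (h₁ t ht))
    (setIntegral_mono_on hφ₂ hg₂ measurableSet_Ioi fun t ht =>
      (Real.le_norm_self _).trans (h₂ t ht))

open Real in
theorem le_exp_integral_mul_integral_of_deriv_le {E h r : ℝ → ℝ} {b : ℝ}
    (hE : Differentiable ℝ E) (hh : Continuous h) (hr : Continuous r) (hh0 : ∀ t ∈ Icc 0 b, 0 ≤ h t)
    (hr0 : ∀ t ∈ Icc 0 b, 0 ≤ r t) (hE0 : E 0 = 0)
    (hderiv : ∀ t ∈ Icc 0 b, deriv E t ≤ h t * E t + r t) {t : ℝ} (ht : t ∈ Icc 0 b) :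
    E t ≤ exp (∫ s in 0..b, h s) * ∫ s in 0..b, r s := by
  set H : ℝ → ℝ := fun u => ∫ s in 0..u, h s
  set R : ℝ → ℝ := fun u => ∫ s in 0..u, r s
  have hb : 0 ≤ b := ht.1.trans ht.2
  have hH_le : H t ≤ H b := intervalIntegral.integral_mono_interval le_rfl ht.1 ht.2
    ((ae_restrict_iff' measurableSet_Ioc).2 (.of_forall fun s hs => hh0 s (Ioc_subset_Icc_self hs)))
    (hh.intervalIntegrable _ _)
  have hR_le : R t ≤ R b := intervalIntegral.integral_mono_interval le_rfl ht.1 ht.2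
    ((ae_restrict_iff' measurableSet_Ioc).2 (.of_forall fun s hs => hr0 s (Ioc_subset_Icc_self hs)))
    (hr.intervalIntegrable _ _)
  have hR_nonneg : 0 ≤ R b := intervalIntegral.integral_nonneg hb hr0
  have hQ : ∀ u, HasDerivAt (fun u => E u * exp (-H u) - R u)
      (deriv E u * exp (-H u) + E u * (exp (-H u) * -h u) - r u) u := fun u =>
    ((hE u).hasDerivAt.mul (hh.integral_hasStrictDerivAt 0 u).hasDerivAt.neg.exp).sub
      (hr.integral_hasStrictDerivAt 0 u).hasDerivAt
  have hanti : AntitoneOn (fun u => E u * exp (-H u) - R u) (Icc 0 b) := by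
    refine antitoneOn_of_deriv_nonpos (convex_Icc 0 b)
      (fun u _ => (hQ u).continuousAt.continuousWithinAt)
      (fun u _ => (hQ u).differentiableAt.differentiableWithinAt) fun u hu => ?_
    rw [interior_Icc] at hu
    have hu' : u ∈ Icc 0 b := Ioo_subset_Icc_self hu
    have hexp_le : exp (-H u) ≤ 1 :=
      exp_le_one_iff.2 (neg_nonpos.2 (intervalIntegral.integral_nonneg hu'.1 fun s hs =>
        hh0 s ⟨hs.1, hs.2.trans hu'.2⟩))
    rw [(hQ u).deriv]
    -- the derivative is `(E' - h E) e^{-H} - r ≤ r (e^{-H} - 1) ≤ 0`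
    nlinarith [hderiv u hu', hr0 u hu', exp_pos (-H u)]
  have hEt : E t * exp (-H t) ≤ R t := by
    simpa [hE0, H, R] using hanti ⟨le_rfl, hb⟩ ht ht.1
  calc E t = E t * exp (-H t) * exp (H t) := by rw [mul_assoc, ← exp_add]; simp
    _ ≤ R b * exp (H b) :=
      mul_le_mul (hEt.trans hR_le) (exp_le_exp.2 hH_le) (exp_pos _).le hR_nonneg
    _ = exp (H b) * R b := mul_comm _ _

open Real in
theorem sq_deriv_add_sq_le_of_deriv_deriv_add_mul_eq {u g r : ℝ → ℝ} {b : ℝ}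
    (hu : ContDiff ℝ 2 u) (hg : Continuous g) (hr : Continuous r) (hu0 : u 0 = 0)
    (hu'0 : deriv u 0 = 0)
    (hode : ∀ t ∈ Icc 0 b, deriv (deriv u) t + g t * u t = r t) {t : ℝ} (ht : t ∈ Icc 0 b) :
    deriv u t ^ 2 + u t ^ 2 ≤ exp (∫ s in 0..b, (2 + |g s|)) * ∫ s in 0..b, r s ^ 2 := by
  have hE : ∀ s, HasDerivAt (fun s => deriv u s ^ 2 + u s ^ 2)
      (2 * deriv u s * deriv (deriv u) s + 2 * u s * deriv u s) s := fun s => by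
    refine (((hu.differentiable_deriv_two s).hasDerivAt.pow 2).add
      ((hu.differentiable two_ne_zero s).hasDerivAt.pow 2)).congr_deriv ?_
    push_cast
    ring
  refine le_exp_integral_mul_integral_of_deriv_le (fun s => (hE s).differentiableAt) (by fun_prop)
    (by fun_prop) (fun _ _ => by positivity) (fun _ _ => by positivity) (by simp [hu0, hu'0])
    (fun s hs => ?_) ht
  rw [(hE s).deriv, eq_sub_of_add_eq (hode s hs)]
  -- AM-GM on each of `2 u u'`, `2 g u u'` and `2 u' r`
  rcases abs_cases (g s) with ⟨hgs, _⟩ | ⟨hgs, _⟩ <;> rw [hgs] <;>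
    nlinarith [sq_nonneg (deriv u s - r s), sq_nonneg (deriv u s - u s),
      sq_nonneg (deriv u s + u s), mul_nonneg (abs_nonneg (g s)) (sq_nonneg (deriv u s + u s)),
      mul_nonneg (abs_nonneg (g s)) (sq_nonneg (deriv u s - u s))]

noncomputable def wronskian (f u : ℝ → ℝ) (t : ℝ) : ℝ := f t * deriv u t - deriv f t * u t

section Wronskian

variable {K f u : ℝ → ℝ} {b t : ℝ}

theorem hasDerivAt_wronskian (hf : ContDiff ℝ 2 f) (hu : ContDiff ℝ 2 u) (s : ℝ) :
    HasDerivAt (wronskian f u) (f s * deriv (deriv u) s - deriv (deriv f) s * u s) s :=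
  (((hf.differentiable two_ne_zero s).hasDerivAt.mul (hu.differentiable_deriv_two s).hasDerivAt).sub
    ((hf.differentiable_deriv_two s).hasDerivAt.mul
      (hu.differentiable two_ne_zero s).hasDerivAt)).congr_deriv (by ring)

theorem wronskian_eq_of_ode (hf : ContDiff ℝ 2 f) (hu : ContDiff ℝ 2 u)
    (hf_ode : ∀ s > b, deriv (deriv f) s + K s * f s = 0)
    (hu_ode : ∀ s > b, deriv (deriv u) s + K s * u s = 0) (ht : b ≤ t) :
    wronskian f u t = wronskian f u b := by
  have hW : ∀ s ∈ Ioo b t, HasDerivAt (wronskian f u) 0 s := fun s hs =>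
    (hasDerivAt_wronskian hf hu s).congr_deriv (by
      rw [eq_neg_of_add_eq_zero_left (hf_ode s hs.1), eq_neg_of_add_eq_zero_left (hu_ode s hs.1)]
      ring)
  have := intervalIntegral.integral_eq_sub_of_hasDerivAt_of_le ht
    (fun s _ => (hasDerivAt_wronskian hf hu s).continuousAt.continuousWithinAt) hW
    intervalIntegrable_const
  simp only [intervalIntegral.integral_zero] at this
  linarith

theorem div_eq_add_wronskian_mul_integral (hf : ContDiff ℝ 2 f) (hu : ContDiff ℝ 2 u)
    (hf_ode : ∀ s > b, deriv (deriv f) s + K s * f s = 0)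
    (hu_ode : ∀ s > b, deriv (deriv u) s + K s * u s = 0) (hfpos : ∀ s ≥ b, 0 < f s)
    (ht : b ≤ t) :
    u t / f t = u b / f b + wronskian f u b * ∫ s in b..t, (f s ^ 2)⁻¹ := by
  have hcont : ContinuousOn (fun s => (f s ^ 2)⁻¹) (Icc b t) := fun s hs =>
    ((hf.continuous.pow 2).continuousAt.inv₀ (pow_pos (hfpos s hs.1) 2).ne').continuousWithinAt
  have hquot : ∀ s ∈ Ioo b t, HasDerivAt (fun s => u s / f s) (wronskian f u b * (f s ^ 2)⁻¹) s :=
    fun s hs => by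
      refine ((hu.differentiable two_ne_zero s).hasDerivAt.div
        (hf.differentiable two_ne_zero s).hasDerivAt (hfpos s hs.1.le).ne').congr_deriv ?_
      rw [← wronskian_eq_of_ode hf hu hf_ode hu_ode hs.1.le, wronskian, div_eq_mul_inv]
      ring
  have := intervalIntegral.integral_eq_sub_of_hasDerivAt_of_le ht
    (fun s hs => ((hu.continuous.continuousAt).div (hf.continuous.continuousAt)
      (hfpos s hs.1).ne').continuousWithinAt) hquot
    ((hcont.intervalIntegrable_of_Icc ht).const_mul _)
  rw [intervalIntegral.integral_const_mul, Pi.div_apply, Pi.div_apply] at this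
  linarith

theorem abs_le_mul_of_ode (hf : ContDiff ℝ 2 f) (hu : ContDiff ℝ 2 u)
    (hf_ode : ∀ s > b, deriv (deriv f) s + K s * f s = 0)
    (hu_ode : ∀ s > b, deriv (deriv u) s + K s * u s = 0) (hfpos : ∀ s ≥ b, 0 < f s)
    (hfint : IntegrableOn (fun s => (f s ^ 2)⁻¹) (Ioi b)) (ht : b ≤ t) :
    |u t| ≤ (|u b| / f b + |wronskian f u b| * ∫ s in Ioi b, (f s ^ 2)⁻¹) * f t := by
  have hint_le : ∫ s in b..t, (f s ^ 2)⁻¹ ≤ ∫ s in Ioi b, (f s ^ 2)⁻¹ := by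
    rw [intervalIntegral.integral_of_le ht]
    exact setIntegral_mono_set hfint (.of_forall fun s => by positivity)
      Ioc_subset_Ioi_self.eventuallyLE
  have hint_nonneg : 0 ≤ ∫ s in b..t, (f s ^ 2)⁻¹ :=
    intervalIntegral.integral_nonneg ht fun s _ => by positivity
  have hft := hfpos t ht
  calc |u t| = |u t / f t| * f t := by rw [abs_div, abs_of_pos hft, div_mul_cancel₀ _ hft.ne']
    _ ≤ (|u b| / f b + |wronskian f u b| * ∫ s in Ioi b, (f s ^ 2)⁻¹) * f t := by
      gcongr
      rw [div_eq_add_wronskian_mul_integral hf hu hf_ode hu_ode hfpos ht]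
      refine (abs_add_le _ _).trans ?_
      rw [abs_div, abs_of_pos (hfpos b le_rfl), abs_mul, abs_of_nonneg hint_nonneg]
      gcongr

end Wronskian

structure IsNormalizedSolution (G m : ℝ → ℝ) : Prop where
  contDiff : ContDiff ℝ 2 m
  ode : ∀ t ≥ 0, deriv (deriv m) t + G t * m t = 0
  zero : m 0 = 0
  deriv_zero : deriv m 0 = 1

structure IsL2Perturbation (K G : ℝ → ℝ) (b δ : ℝ) : Prop where
  continuous : Continuous G
  eq_of_lt : ∀ t > b, G t = K t
  integral_sq_le : ∫ t in 0..b, (G t - K t) ^ 2 ≤ δ ^ 2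

theorem isL2Perturbation_of_sqrt_integral_lt {K G : ℝ → ℝ} {a b δ : ℝ} (hb : 0 ≤ b)
    (hK : Continuous K) (hG : Continuous G) (hGK : ∀ t, t ∉ Icc a b → G t = K t)
    (hδ : √(∫ t in Ici 0, (G t - K t) ^ 2) < δ) : IsL2Perturbation K G b δ := by
  have hint : Integrable fun t => (G t - K t) ^ 2 :=
    (by fun_prop : Continuous _).integrable_of_hasCompactSupport
      (HasCompactSupport.intro (isCompact_Icc (a := a) (b := b)) fun t ht => by simp [hGK t ht])
  refine ⟨hG, fun t ht => hGK t fun h => (not_le.2 ht) h.2, ?_⟩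
  rw [intervalIntegral.integral_of_le hb]
  calc ∫ t in Ioc 0 b, (G t - K t) ^ 2 ≤ ∫ t in Ici 0, (G t - K t) ^ 2 :=
        setIntegral_mono_set hint.integrableOn (.of_forall fun _ => sq_nonneg _)
          (Ioc_subset_Ioi_self.trans Ioi_subset_Ici_self).eventuallyLE
    _ ≤ δ ^ 2 := ((Real.sqrt_lt' ((Real.sqrt_nonneg _).trans_lt hδ)).1 hδ).le

namespace IsNormalizedSolution

variable {K f : ℝ → ℝ}

theorem deriv_sub {G m : ℝ → ℝ} (hm : IsNormalizedSolution G m)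
    (hf : IsNormalizedSolution K f) :
    deriv (fun s => m s - f s) = fun s => deriv m s - deriv f s :=
  funext fun _ => deriv_fun_sub (hm.contDiff.differentiable two_ne_zero _)
    (hf.contDiff.differentiable two_ne_zero _)

theorem deriv_deriv_sub_add_mul {G m : ℝ → ℝ} (hm : IsNormalizedSolution G m)
    (hf : IsNormalizedSolution K f) {t : ℝ} (ht : 0 ≤ t) :
    deriv (deriv (fun s => m s - f s)) t + G t * (m t - f t) = (K t - G t) * f t := by
  rw [hm.deriv_sub hf, deriv_fun_sub (hm.contDiff.differentiable_deriv_two t)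
    (hf.contDiff.differentiable_deriv_two t)]
  linear_combination hm.ode t ht - hf.ode t ht

open Real in
theorem exists_abs_sub_le_of_mem_Icc (hK : Continuous K) (hf : IsNormalizedSolution K f) {b : ℝ}
    (hb : 0 ≤ b) :
    ∃ C ≥ 0, ∀ δ ∈ Ioc (0 : ℝ) 1, ∀ G m, IsL2Perturbation K G b δ → IsNormalizedSolution G m →
      ∀ t ∈ Icc 0 b, |m t - f t| ≤ C * δ ∧ |deriv m t - deriv f t| ≤ C * δ := by
  obtain ⟨M, hM⟩ := isCompact_Icc.exists_bound_of_continuousOn (s := Icc 0 b)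
    hf.contDiff.continuous.continuousOn
  have hM0 : 0 ≤ M := (norm_nonneg _).trans (hM 0 ⟨le_rfl, hb⟩)
  set CH := 2 * b + (∫ s in 0..b, |K s|) + (1 + b) / 2 with hCH
  refine ⟨exp (CH / 2) * M, by positivity, fun δ ⟨hδ0, hδ1⟩ G m hG hm t ht => ?_⟩
  have hGc := hG.continuous
  have hfc := hf.contDiff.continuous
  have hL1 : ∫ s in 0..b, |G s - K s| ≤ (1 + b) / 2 * δ := by
    simpa using intervalIntegral_abs_le_of_integral_sq_le hb hδ0 (hGc.sub hK) hG.integral_sq_le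
  have hexp : ∫ s in 0..b, (2 + |G s|) ≤ CH := calc
    _ ≤ ∫ s in 0..b, (2 + |K s| + |G s - K s|) :=
      intervalIntegral.integral_mono_on hb ((by fun_prop : Continuous _).intervalIntegrable _ _)
        ((by fun_prop : Continuous _).intervalIntegrable _ _) fun s _ => by
          linarith [abs_sub_abs_le_abs_sub (G s) (K s)]
    _ = 2 * b + (∫ s in 0..b, |K s|) + ∫ s in 0..b, |G s - K s| := by
      rw [intervalIntegral.integral_add ((by fun_prop : Continuous _).intervalIntegrable _ _)
          ((by fun_prop : Continuous _).intervalIntegrable _ _),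
        intervalIntegral.integral_add intervalIntegrable_const
          ((by fun_prop : Continuous _).intervalIntegrable _ _),
        intervalIntegral.integral_const, smul_eq_mul, sub_zero, mul_comm]
    _ ≤ CH := by
      have : (1 + b) / 2 * δ ≤ (1 + b) / 2 := mul_le_of_le_one_right (by positivity) hδ1
      linarith [hCH]
  have hsrc : ∫ s in 0..b, ((K s - G s) * f s) ^ 2 ≤ M ^ 2 * δ ^ 2 := calc
    _ ≤ ∫ s in 0..b, M ^ 2 * (G s - K s) ^ 2 :=
      intervalIntegral.integral_mono_on hb
        ((by fun_prop : Continuous _).intervalIntegrable _ _)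
        ((by fun_prop : Continuous _).intervalIntegrable _ _) fun s hs => by
          rw [mul_pow, ← neg_sub, neg_sq, mul_comm]
          exact mul_le_mul_of_nonneg_right
            (sq_le_sq' (abs_le.1 (hM s hs)).1 (abs_le.1 (hM s hs)).2) (sq_nonneg _)
    _ = M ^ 2 * ∫ s in 0..b, (G s - K s) ^ 2 := intervalIntegral.integral_const_mul _ _
    _ ≤ M ^ 2 * δ ^ 2 := by gcongr; exact hG.integral_sq_le
  have henergy :
      deriv (fun s => m s - f s) t ^ 2 + (m t - f t) ^ 2 ≤ (exp (CH / 2) * M * δ) ^ 2 := calc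
    _ ≤ exp (∫ s in 0..b, (2 + |G s|)) * ∫ s in 0..b, ((K s - G s) * f s) ^ 2 :=
      sq_deriv_add_sq_le_of_deriv_deriv_add_mul_eq (hm.contDiff.sub hf.contDiff) hGc
        (by fun_prop) (by simp [hm.zero, hf.zero])
        (by simp only [hm.deriv_sub hf, hm.deriv_zero, hf.deriv_zero, sub_self])
        (fun s hs => hm.deriv_deriv_sub_add_mul hf hs.1) ht
    _ ≤ exp CH * (M ^ 2 * δ ^ 2) := mul_le_mul (exp_le_exp.2 hexp) hsrc
      (intervalIntegral.integral_nonneg hb fun _ _ => sq_nonneg _) (exp_pos _).le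
    _ = (exp (CH / 2) * M * δ) ^ 2 := by
      rw [mul_pow, mul_pow, sq (exp _), ← exp_add, add_halves]
      ring
  have hCδ : 0 ≤ exp (CH / 2) * M * δ := by positivity
  rw [hm.deriv_sub hf] at henergy
  exact ⟨abs_le_of_sq_le_sq (by nlinarith) hCδ, abs_le_of_sq_le_sq (by nlinarith) hCδ⟩

theorem exists_abs_sub_le_mul_of_one_le (hK : Continuous K) (hf : IsNormalizedSolution K f)
    (hfpos : ∀ t > 0, 0 < f t) (hfint : IntegrableOn (fun t => (f t ^ 2)⁻¹) (Ici 1)) {b : ℝ}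
    (hb : 1 ≤ b) :
    ∃ C ≥ 0, ∀ δ ∈ Ioc (0 : ℝ) 1, ∀ G m, IsL2Perturbation K G b δ → IsNormalizedSolution G m →
      ∀ t ≥ 1, |m t - f t| ≤ C * δ * f t := by
  obtain ⟨C₀, hC₀, hnear⟩ := hf.exists_abs_sub_le_of_mem_Icc hK (zero_le_one.trans hb)
  obtain ⟨x₀, hx₀, hmin⟩ :=
    isCompact_Icc.exists_isMinOn (nonempty_Icc.2 hb) hf.contDiff.continuous.continuousOn
  have hfx₀ : 0 < f x₀ := hfpos x₀ (by linarith [hx₀.1])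
  have hfb : 0 < f b := hfpos b (by linarith)
  set J := ∫ s in Ioi b, (f s ^ 2)⁻¹
  have hJ : 0 ≤ J := setIntegral_nonneg measurableSet_Ioi fun _ _ => by positivity
  set C₁ := C₀ / f b + (f b + |deriv f b|) * C₀ * J with hC₁
  refine ⟨max (C₀ / f x₀) C₁, by positivity, fun δ hδ G m hG hm t ht => ?_⟩
  have hδ0 : 0 ≤ δ := hδ.1.le
  have hft : 0 < f t := hfpos t (by linarith)
  rcases le_total t b with htb | hbt
  · calc |m t - f t| ≤ C₀ * δ := (hnear δ hδ G m hG hm t ⟨by linarith, htb⟩).1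
      _ = C₀ / f x₀ * δ * f x₀ := by field_simp
      _ ≤ max (C₀ / f x₀) C₁ * δ * f t :=
        mul_le_mul (mul_le_mul_of_nonneg_right (le_max_left _ _) hδ0) (hmin ⟨ht, htb⟩) hfx₀.le
          (by positivity)
  · have hu_ode : ∀ s > b, deriv (deriv (fun s => m s - f s)) s + K s * (m s - f s) = 0 :=
      fun s hs => by
        simpa [hG.eq_of_lt s hs] using hm.deriv_deriv_sub_add_mul hf (t := s) (by linarith)
    obtain ⟨hub, hu'b⟩ := hnear δ hδ G m hG hm b ⟨by linarith, le_rfl⟩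
    have hW : |wronskian f (fun s => m s - f s) b| ≤ (f b + |deriv f b|) * (C₀ * δ) := by
      rw [wronskian, hm.deriv_sub hf]
      calc _ ≤ |f b * (deriv m b - deriv f b)| + |deriv f b * (m b - f b)| := abs_sub _ _
        _ ≤ f b * (C₀ * δ) + |deriv f b| * (C₀ * δ) := by
          rw [abs_mul, abs_mul, abs_of_pos hfb]; gcongr
        _ = (f b + |deriv f b|) * (C₀ * δ) := by ring
    calc |m t - f t| ≤ (|m b - f b| / f b + |wronskian f (fun s => m s - f s) b| * J) * f t :=
          abs_le_mul_of_ode hf.contDiff (hm.contDiff.sub hf.contDiff)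
            (fun s hs => hf.ode s (by linarith)) hu_ode (fun s hs => hfpos s (by linarith))
            (hfint.mono_set (Ioi_subset_Ici (by linarith))) hbt
      _ ≤ (C₀ * δ / f b + (f b + |deriv f b|) * (C₀ * δ) * J) * f t := by
        gcongr
      _ = C₁ * δ * f t := by rw [hC₁]; ring
      _ ≤ max (C₀ / f x₀) C₁ * δ * f t :=
        mul_le_mul_of_nonneg_right (mul_le_mul_of_nonneg_right (le_max_right _ _) hδ0) hft.le

theorem exists_setIntegral_abs_mul_sub_mul_lt (hK : Continuous K)
    (hf : IsNormalizedSolution K f) (hfpos : ∀ t > 0, 0 < f t)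
    (hfint : IntegrableOn (fun t => (f t ^ 2)⁻¹) (Ici 1))
    (hf'' : IntegrableOn (fun t => |deriv (deriv f) t|) (Ici 0)) {b ε : ℝ} (hb : 1 ≤ b)
    (hε : 0 < ε) :
    ∃ δ > 0, ∀ G m, IsL2Perturbation K G b δ → IsNormalizedSolution G m →
      ∫ t in Ici 0, |G t * m t - K t * f t| < ε := by
  have hb0 : 0 ≤ b := zero_le_one.trans hb
  obtain ⟨C₀, hC₀, hnear⟩ := hf.exists_abs_sub_le_of_mem_Icc hK hb0
  obtain ⟨C₁, -, hfar⟩ := hf.exists_abs_sub_le_mul_of_one_le hK hfpos hfint hb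
  obtain ⟨MK, hMK⟩ := isCompact_Icc.exists_bound_of_continuousOn (s := Icc 0 b) hK.continuousOn
  obtain ⟨Mf, hMf⟩ := isCompact_Icc.exists_bound_of_continuousOn (s := Icc 0 b)
    hf.contDiff.continuous.continuousOn
  have hMf0 : 0 ≤ Mf := (norm_nonneg _).trans (hMf 0 ⟨le_rfl, hb0⟩)
  set I := ∫ t in Ioi b, |deriv (deriv f) t|
  obtain ⟨δ, hδ0, hδ1, hδε⟩ :=
    exists_pos_le_and_mul_lt ((Mf + C₀) * ((1 + b) / 2) + b * (MK * C₀) + C₁ * I) one_pos hε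
  refine ⟨δ, hδ0, fun G m hG hm => hδε.trans_le' ?_⟩
  have hGc := hG.continuous
  have hfc := hf.contDiff.continuous
  have hmc := hm.contDiff.continuous
  have hL1 : ∫ t in 0..b, |G t - K t| ≤ (1 + b) / 2 * δ := by
    simpa using intervalIntegral_abs_le_of_integral_sq_le hb0 hδ0 (hGc.sub hK) hG.integral_sq_le
  have hnear' : ∀ t ∈ Icc 0 b,
      ‖|G t * m t - K t * f t|‖ ≤ (Mf + C₀) * |G t - K t| + MK * (C₀ * δ) := fun t ht => by
    obtain ⟨hu, -⟩ := hnear δ ⟨hδ0, hδ1⟩ G m hG hm t ht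
    have hm_le : |m t| ≤ Mf + C₀ := calc
      |m t| ≤ |f t| + |m t - f t| := by simpa using abs_add_le (f t) (m t - f t)
      _ ≤ Mf + C₀ * 1 := add_le_add (hMf t ht) (hu.trans (by gcongr))
      _ = Mf + C₀ := by ring
    rw [Real.norm_eq_abs, abs_abs,
      show G t * m t - K t * f t = (G t - K t) * m t + K t * (m t - f t) by ring]
    refine (abs_add_le _ _).trans ?_
    rw [abs_mul, abs_mul, mul_comm (Mf + C₀)]
    exact add_le_add (mul_le_mul_of_nonneg_left hm_le (abs_nonneg _))
      (mul_le_mul (hMK t ht) hu (abs_nonneg _) ((norm_nonneg _).trans (hMK t ht)))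
  have hfar' : ∀ t ∈ Ioi b, ‖|G t * m t - K t * f t|‖ ≤ C₁ * δ * |deriv (deriv f) t| :=
    fun t ht => by
      have ht1 : 1 ≤ t := hb.trans (le_of_lt ht)
      rw [Real.norm_eq_abs, abs_abs, hG.eq_of_lt t ht, ← mul_sub, abs_mul,
        eq_neg_of_add_eq_zero_left (hf.ode t (by linarith)), abs_neg, abs_mul,
        abs_of_pos (hfpos t (by linarith))]
      calc |K t| * |m t - f t| ≤ |K t| * (C₁ * δ * f t) :=
            mul_le_mul_of_nonneg_left (hfar δ ⟨hδ0, hδ1⟩ G m hG hm t ht1) (abs_nonneg _)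
        _ = C₁ * δ * (|K t| * f t) := by ring
  calc ∫ t in Ici 0, |G t * m t - K t * f t|
      ≤ (∫ t in 0..b, ((Mf + C₀) * |G t - K t| + MK * (C₀ * δ))) +
          ∫ t in Ioi b, C₁ * δ * |deriv (deriv f) t| :=
        setIntegral_Ici_le_of_le hb0 (by fun_prop : Continuous _).aestronglyMeasurable
          ((by fun_prop : Continuous _).intervalIntegrable _ _)
          ((hf''.mono_set (Ioi_subset_Ici hb0)).const_mul _) hnear' hfar'
    _ = (Mf + C₀) * (∫ t in 0..b, |G t - K t|) + b * (MK * (C₀ * δ)) + C₁ * δ * I := by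
      rw [intervalIntegral.integral_add ((by fun_prop : Continuous _).intervalIntegrable _ _)
          intervalIntegrable_const, intervalIntegral.integral_const_mul,
        intervalIntegral.integral_const, smul_eq_mul, sub_zero, integral_const_mul]
    _ ≤ (Mf + C₀) * ((1 + b) / 2 * δ) + b * (MK * (C₀ * δ)) + C₁ * δ * I := by gcongr
    _ = ((Mf + C₀) * ((1 + b) / 2) + b * (MK * C₀) + C₁ * I) * δ := by ring

theorem exists_setIntegral_abs_inv_sq_sub_inv_sq_lt (hK : Continuous K)
    (hf : IsNormalizedSolution K f) (hfpos : ∀ t > 0, 0 < f t)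
    (hfint : IntegrableOn (fun t => (f t ^ 2)⁻¹) (Ici 1)) {b ε : ℝ} (hb : 1 ≤ b) (hε : 0 < ε) :
    ∃ δ > 0, ∀ G m, IsL2Perturbation K G b δ → IsNormalizedSolution G m →
      ∫ t in Ici 1, |(m t ^ 2)⁻¹ - (f t ^ 2)⁻¹| < ε := by
  obtain ⟨C, -, hfar⟩ := hf.exists_abs_sub_le_mul_of_one_le hK hfpos hfint hb
  set J := ∫ t in Ici 1, (f t ^ 2)⁻¹
  obtain ⟨δ₁, hδ₁, hδ₁1, hCδ₁⟩ := exists_pos_le_and_mul_lt C one_pos (one_half_pos (α := ℝ))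
  obtain ⟨δ, hδ, hδδ₁, hδε⟩ := exists_pos_le_and_mul_lt (10 * C * J) hδ₁ hε
  refine ⟨δ, hδ, fun G m hG hm => hδε.trans_le' ?_⟩
  have hCδ : C * δ ≤ 1 / 2 := by nlinarith
  calc ∫ t in Ici 1, |(m t ^ 2)⁻¹ - (f t ^ 2)⁻¹| ≤ 10 * (C * δ) * J :=
        setIntegral_abs_inv_sq_sub_inv_sq_le hCδ
          (fun t (ht : 1 ≤ t) => hfpos t (by linarith)) hfint
          (hfar δ ⟨hδ, hδδ₁.trans hδ₁1⟩ G m hG hm)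
    _ = 10 * C * J * δ := by ring

end IsNormalizedSolution

theorem stmt7 (K f : ℝ → ℝ)
    (hKc : Continuous K) (hf : ContDiff ℝ 2 f)
    (hfode : ∀ t ≥ (0:ℝ), deriv (deriv f) t + K t * f t = 0)
    (hf0 : f 0 = 0) (hf0' : deriv f 0 = 1)
    (hfpos : ∀ t > (0:ℝ), 0 < f t)
    (hfint : IntegrableOn (fun t => ((f t) ^ 2)⁻¹) (Ici (1:ℝ)))
    (hf'' : IntegrableOn (fun t => |deriv (deriv f) t|) (Ici (0:ℝ))) :
    ∀ ε > (0:ℝ), ∀ a b : ℝ, 1 ≤ a → a < b →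
      ∃ δ > (0:ℝ), ∀ G m : ℝ → ℝ, Continuous G →
        (∀ t, t ∉ Icc a b → G t = K t) →
        Real.sqrt (∫ t in Ici (0:ℝ), (G t - K t) ^ 2) < δ →
        ContDiff ℝ 2 m →
        (∀ t ≥ (0:ℝ), deriv (deriv m) t + G t * m t = 0) →
        m 0 = 0 → deriv m 0 = 1 →
        (∫ t in Ici (0:ℝ), |G t * m t - K t * f t| < ε) ∧
        (∫ t in Ici (1:ℝ), |((m t) ^ 2)⁻¹ - ((f t) ^ 2)⁻¹| < ε) := by
  intro ε hε a b ha hab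
  have hb : 1 ≤ b := ha.trans hab.le
  have hfsol : IsNormalizedSolution K f := ⟨hf, hfode, hf0, hf0'⟩
  obtain ⟨δ₁, hδ₁, h₁⟩ := hfsol.exists_setIntegral_abs_mul_sub_mul_lt hKc hfpos hfint hf'' hb hε
  obtain ⟨δ₂, hδ₂, h₂⟩ := hfsol.exists_setIntegral_abs_inv_sq_sub_inv_sq_lt hKc hfpos hfint hb hε
  refine ⟨min δ₁ δ₂, lt_min hδ₁ hδ₂, fun G m hG hGK hL2 hm hmode hm0 hm0' => ?_⟩
  have hmsol : IsNormalizedSolution G m := ⟨hm, hmode, hm0, hm0'⟩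
  have hpert : ∀ δ, min δ₁ δ₂ ≤ δ → IsL2Perturbation K G b δ := fun δ hδ =>
    isL2Perturbation_of_sqrt_integral_lt (zero_le_one.trans hb) hKc hG hGK (hL2.trans_le hδ)
  exact ⟨h₁ G m (hpert δ₁ (min_le_left _ _)) hmsol, h₂ G m (hpert δ₂ (min_le_right _ _)) hmsol⟩
end
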